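/- arXiv:2209.08157 — 12 statements merged into one kernel-verified Lean document; each statement's English description precedes it below -/
import Mathlib

section
/- Let a, s, t be rational numbers with s ≠ 0, t ≠ 0, at⁴ − 2s⁴ ≠ 0, 4at⁴ + s⁴ ≠ 0, and 2a²t⁸ + 10as⁴t⁴ − s⁸ ≠ 0. Define x = 6ast³(at⁴ − 2s⁴)² / ((4at⁴ + s⁴)(2a²t⁸ + 10as⁴t⁴ − s⁸)), y = (3/2)·s⁵(4at⁴ + s⁴)² / (t(at⁴ − 2s⁴)(2a²t⁸ + 10as⁴t⁴ − s⁸)), and z = (2/3)·(2a²t⁸ + 10as⁴t⁴ − s⁸) / (s³t(4at⁴ + s⁴)). Then xyz(x + y + z) = a. -/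
/-!
Put `P = a t⁴ - 2 s⁴`, `Q = 4 a t⁴ + s⁴` and `R = 2 a² t⁸ + 10 a s⁴ t⁴ - s⁸`. The product of
the three fractions telescopes to `x y z = 6 a s³ t P / R`. Over the common denominator
`6 s³ t P Q R` the sum has numerator `36 a s⁴ t⁴ P³ + 9 s⁸ Q³ + 4 P R²`, and since `Q - 4 P = 9 s⁴`
the polynomial identity `4 u (u - 2 v)³ + v (4 u + v)³ = (2 u² + 10 u v - v²)²` at `u = a t⁴`,
`v = s⁴` turns it into `Q R²`, so `x + y + z = R / (6 s³ t P)`.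
-/

theorem euler_identity {R : Type*} [CommRing R] (u v : R) :
    4 * u * (u - 2 * v) ^ 3 + v * (4 * u + v) ^ 3 = (2 * u ^ 2 + 10 * u * v - v ^ 2) ^ 2 := by
  ring

namespace EulerXYZ

variable {K : Type*} [Field K] [CharZero K] {a s t P Q R : K}

theorem mul_mul_eq (hs : s ≠ 0) (ht : t ≠ 0) (hP : P ≠ 0) (hQ : Q ≠ 0) (hR : R ≠ 0) :
    6 * a * s * t ^ 3 * P ^ 2 / (Q * R) * (3 / 2 * (s ^ 5 * Q ^ 2) / (t * P * R)) *
      (2 / 3 * R / (s ^ 3 * t * Q)) = 6 * a * s ^ 3 * t * P / R := by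
  field_simp

theorem add_add_eq (hs : s ≠ 0) (ht : t ≠ 0) (hP : P ≠ 0) (hQ : Q ≠ 0) (hR : R ≠ 0)
    (hQP : Q = 4 * P + 9 * s ^ 4) (hRsq : R ^ 2 = 4 * (a * t ^ 4) * P ^ 3 + s ^ 4 * Q ^ 3) :
    6 * a * s * t ^ 3 * P ^ 2 / (Q * R) + 3 / 2 * (s ^ 5 * Q ^ 2) / (t * P * R) +
      2 / 3 * R / (s ^ 3 * t * Q) = R / (6 * s ^ 3 * t * P) := by
  field_simp
  linear_combination (-54 * s ^ 4) * hRsq - 6 * R ^ 2 * hQP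

theorem mul_mul_mul_add_add_eq (hs : s ≠ 0) (ht : t ≠ 0) (hP : P ≠ 0) (hQ : Q ≠ 0)
    (hR : R ≠ 0) (hQP : Q = 4 * P + 9 * s ^ 4)
    (hRsq : R ^ 2 = 4 * (a * t ^ 4) * P ^ 3 + s ^ 4 * Q ^ 3) :
    let x := 6 * a * s * t ^ 3 * P ^ 2 / (Q * R)
    let y := 3 / 2 * (s ^ 5 * Q ^ 2) / (t * P * R)
    let z := 2 / 3 * R / (s ^ 3 * t * Q)
    x * y * z * (x + y + z) = a := by
  intro x y z
  rw [mul_mul_eq hs ht hP hQ hR, add_add_eq hs ht hP hQ hR hQP hRsq]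
  field_simp

end EulerXYZ

theorem stmt_0 (a s t : ℚ) (hs : s ≠ 0) (ht : t ≠ 0)
    (h1 : a * t ^ 4 - 2 * s ^ 4 ≠ 0)
    (h2 : 4 * a * t ^ 4 + s ^ 4 ≠ 0)
    (h3 : 2 * a ^ 2 * t ^ 8 + 10 * a * s ^ 4 * t ^ 4 - s ^ 8 ≠ 0)
    (x y z : ℚ)
    (hx : x = 6 * a * s * t ^ 3 * (a * t ^ 4 - 2 * s ^ 4) ^ 2 /
      ((4 * a * t ^ 4 + s ^ 4) * (2 * a ^ 2 * t ^ 8 + 10 * a * s ^ 4 * t ^ 4 - s ^ 8)))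
    (hy : y = 3 / 2 * (s ^ 5 * (4 * a * t ^ 4 + s ^ 4) ^ 2) /
      (t * (a * t ^ 4 - 2 * s ^ 4) * (2 * a ^ 2 * t ^ 8 + 10 * a * s ^ 4 * t ^ 4 - s ^ 8)))
    (hz : z = 2 / 3 * (2 * a ^ 2 * t ^ 8 + 10 * a * s ^ 4 * t ^ 4 - s ^ 8) /
      (s ^ 3 * t * (4 * a * t ^ 4 + s ^ 4))) :
    x * y * z * (x + y + z) = a := by
  subst hx hy hz
  exact EulerXYZ.mul_mul_mul_add_add_eq hs ht h1 h2 h3 (by ring)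
    (by linear_combination euler_identity (a * t ^ 4) (s ^ 4))
end

section
/- Let a, s, t, A, B, C be rational numbers with s ≠ 0, t ≠ 0, A ≠ 0, B ≠ 0, C ≠ 0, and suppose 36as⁴t⁴A³ + 9s⁸B³ + 4C²A = C²B. Define x = 6ast³A²/(BC), y = (3/2)·s⁵B²/(tAC), and z = (2/3)·C/(s³tB). Then xyz(x + y + z) = a. -/
/-! In Euler's ansatz the product `xyz = 6as³tA/C` does not involve `B`, and after clearing
denominators the cubic condition says exactly that `x + y + z = C/(6s³tA)`, i.e. `a/(xyz)`. -/

section EulerAnsatz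

variable {K : Type*} [Field K] [CharZero K] {a s t A B C : K}

theorem euler_ansatz_mul (hB : B ≠ 0) :
    6 * a * s * t ^ 3 * A ^ 2 / (B * C) * (3 / 2 * (s ^ 5 * B ^ 2) / (t * A * C)) *
      (2 / 3 * C / (s ^ 3 * t * B)) = 6 * a * s ^ 3 * t * A / C := by
  field_simp

theorem euler_ansatz_add (hs : s ≠ 0) (ht : t ≠ 0) (hA : A ≠ 0) (hB : B ≠ 0) (hC : C ≠ 0)
    (h : 36 * a * s ^ 4 * t ^ 4 * A ^ 3 + 9 * s ^ 8 * B ^ 3 + 4 * C ^ 2 * A = C ^ 2 * B) :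
    6 * a * s * t ^ 3 * A ^ 2 / (B * C) + 3 / 2 * (s ^ 5 * B ^ 2) / (t * A * C) +
      2 / 3 * C / (s ^ 3 * t * B) = C / (6 * s ^ 3 * t * A) := by
  field_simp
  linear_combination 6 * h

end EulerAnsatz

theorem stmt_1 (a s t A B C : ℚ) (hs : s ≠ 0) (ht : t ≠ 0)
    (hA : A ≠ 0) (hB : B ≠ 0) (hC : C ≠ 0)
    (h : 36 * a * s ^ 4 * t ^ 4 * A ^ 3 + 9 * s ^ 8 * B ^ 3 + 4 * C ^ 2 * A = C ^ 2 * B)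
    (x y z : ℚ)
    (hx : x = 6 * a * s * t ^ 3 * A ^ 2 / (B * C))
    (hy : y = 3 / 2 * (s ^ 5 * B ^ 2) / (t * A * C))
    (hz : z = 2 / 3 * C / (s ^ 3 * t * B)) :
    x * y * z * (x + y + z) = a := by
  subst hx hy hz
  rw [euler_ansatz_mul hB, euler_ansatz_add hs ht hA hB hC h]
  field_simp
end

section
/- For all rational numbers a, s, t, the polynomial identity 36as⁴t⁴(at⁴ − 2s⁴)³ + 9s⁸(4at⁴ + s⁴)³ + 4(2a²t⁸ + 10as⁴t⁴ − s⁸)²(at⁴ − 2s⁴) = (2a²t⁸ + 10as⁴t⁴ − s⁸)²(4at⁴ + s⁴) holds. -/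
theorem stmt_2 (a s t : ℚ) :
    36 * a * s ^ 4 * t ^ 4 * (a * t ^ 4 - 2 * s ^ 4) ^ 3 +
      9 * s ^ 8 * (4 * a * t ^ 4 + s ^ 4) ^ 3 +
      4 * (2 * a ^ 2 * t ^ 8 + 10 * a * s ^ 4 * t ^ 4 - s ^ 8) ^ 2 * (a * t ^ 4 - 2 * s ^ 4) =
    (2 * a ^ 2 * t ^ 8 + 10 * a * s ^ 4 * t ^ 4 - s ^ 8) ^ 2 * (4 * a * t ^ 4 + s ^ 4) := by ring
end

section
/- Let a, s, t be rational numbers with s ≠ 0, t ≠ 0, and with each of the following nonzero: at⁴ − 2s⁴, 2a²t⁸ + 10as⁴t⁴ − s⁸, a²t⁸ + 14as⁴t⁴ − 5s⁸, at⁴ + s⁴, a³t¹² + 3a²t⁸s⁴ + 111as⁸t⁴ + s¹², and D := a⁶t²⁴ + 6a⁵t²⁰s⁴ − 255a⁴t¹⁶s⁸ − 790a³t¹²s¹² − 2253a²t⁸s¹⁶ − 264as²⁰t⁴ + s²⁴. Define x = 18as⁵t³(at⁴ − 2s⁴)²(2a²t⁸ + 10as⁴t⁴ − s⁸)²(a²t⁸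 + 14as⁴t⁴ − 5s⁸) / ((at⁴ + s⁴)(a³t¹² + 3a²t⁸s⁴ + 111as⁸t⁴ + s¹²)·D), y = −(1/6)·(at⁴ + s⁴)²(a³t¹² + 3a²t⁸s⁴ + 111as⁸t⁴ + s¹²)²(a²t⁸ + 14as⁴t⁴ − 5s⁸) / (s³t(at⁴ − 2s⁴)(2a²t⁸ + 10as⁴t⁴ − s⁸)·D), and z = 2s·D / (t(a²t⁸ + 14as⁴t⁴ − 5s⁸)(at⁴ + s⁴)(a³t¹² + 3a²t⁸s⁴ + 111as⁸t⁴ + s¹²)). Then xyz(x + y + z) = a. -/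
/-!
The product and the sum of the three fractions are reciprocal up to the factor `a`:
`x y z = -6 a s³ t p₁ p₂ p₃ / D` and `x + y + z = -D / (6 s³ t p₁ p₂ p₃)`, where
`p₁ = a t⁴ - 2 s⁴`, `p₂ = 2a² t⁸ + 10 a s⁴ t⁴ - s⁸`, `p₃ = a² t⁸ + 14 a s⁴ t⁴ - 5 s⁸`.
The first is pure cancellation of monomials in the factors; only the second uses the
polynomials themselves.
-/

section EulerThreeP

variable {K : Type*} [Field K] [CharZero K]

theorem mul_mul_eq_of_factors {a s t p₁ p₂ p₃ p₄ p₅ D x y z : K}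
    (hs : s ≠ 0) (ht : t ≠ 0) (hp₁ : p₁ ≠ 0) (hp₂ : p₂ ≠ 0) (hp₃ : p₃ ≠ 0) (hp₄ : p₄ ≠ 0)
    (hp₅ : p₅ ≠ 0) (hD : D ≠ 0)
    (hx : x = 18 * a * s ^ 5 * t ^ 3 * p₁ ^ 2 * p₂ ^ 2 * p₃ / (p₄ * p₅ * D))
    (hy : y = -(1 / 6) * p₄ ^ 2 * p₅ ^ 2 * p₃ / (s ^ 3 * t * p₁ * p₂ * D))
    (hz : z = 2 * s * D / (t * p₃ * p₄ * p₅)) :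
    x * y * z = -6 * a * s ^ 3 * t * p₁ * p₂ * p₃ / D := by
  subst hx hy hz
  field_simp
  ring

theorem add_add_eq_of_factors {a s t p₁ p₂ p₃ p₄ p₅ D x y z : K}
    (hs : s ≠ 0) (ht : t ≠ 0) (hp₁ : p₁ ≠ 0) (hp₂ : p₂ ≠ 0) (hp₃ : p₃ ≠ 0) (hp₄ : p₄ ≠ 0)
    (hp₅ : p₅ ≠ 0) (hD : D ≠ 0)
    (ep₁ : p₁ = a * t ^ 4 - 2 * s ^ 4)
    (ep₂ : p₂ = 2 * a ^ 2 * t ^ 8 + 10 * a * s ^ 4 * t ^ 4 - s ^ 8)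
    (ep₃ : p₃ = a ^ 2 * t ^ 8 + 14 * a * s ^ 4 * t ^ 4 - 5 * s ^ 8)
    (ep₄ : p₄ = a * t ^ 4 + s ^ 4)
    (ep₅ : p₅ = a ^ 3 * t ^ 12 + 3 * a ^ 2 * t ^ 8 * s ^ 4 + 111 * a * s ^ 8 * t ^ 4 + s ^ 12)
    (eD : D = a ^ 6 * t ^ 24 + 6 * a ^ 5 * t ^ 20 * s ^ 4 - 255 * a ^ 4 * t ^ 16 * s ^ 8 -
      790 * a ^ 3 * t ^ 12 * s ^ 12 - 2253 * a ^ 2 * t ^ 8 * s ^ 16 - 264 * a * s ^ 20 * t ^ 4 + s ^ 24)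
    (hx : x = 18 * a * s ^ 5 * t ^ 3 * p₁ ^ 2 * p₂ ^ 2 * p₃ / (p₄ * p₅ * D))
    (hy : y = -(1 / 6) * p₄ ^ 2 * p₅ ^ 2 * p₃ / (s ^ 3 * t * p₁ * p₂ * D))
    (hz : z = 2 * s * D / (t * p₃ * p₄ * p₅)) :
    x + y + z = -D / (6 * s ^ 3 * t * p₁ * p₂ * p₃) := by
  subst hx hy hz
  field_simp
  subst ep₁ ep₂ ep₃ ep₄ ep₅ eD
  ring

end EulerThreeP

theorem stmt_4 (a s t : ℚ) (hs : s ≠ 0) (ht : t ≠ 0)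
    (h1 : a * t ^ 4 - 2 * s ^ 4 ≠ 0)
    (h2 : 2 * a ^ 2 * t ^ 8 + 10 * a * s ^ 4 * t ^ 4 - s ^ 8 ≠ 0)
    (h3 : a ^ 2 * t ^ 8 + 14 * a * s ^ 4 * t ^ 4 - 5 * s ^ 8 ≠ 0)
    (h4 : a * t ^ 4 + s ^ 4 ≠ 0)
    (h5 : a ^ 3 * t ^ 12 + 3 * a ^ 2 * t ^ 8 * s ^ 4 + 111 * a * s ^ 8 * t ^ 4 + s ^ 12 ≠ 0)
    (D : ℚ)
    (hD : D = a ^ 6 * t ^ 24 + 6 * a ^ 5 * t ^ 20 * s ^ 4 - 255 * a ^ 4 * t ^ 16 * s ^ 8 -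
      790 * a ^ 3 * t ^ 12 * s ^ 12 - 2253 * a ^ 2 * t ^ 8 * s ^ 16 - 264 * a * s ^ 20 * t ^ 4 + s ^ 24)
    (h6 : D ≠ 0)
    (x y z : ℚ)
    (hx : x = 18 * a * s ^ 5 * t ^ 3 * (a * t ^ 4 - 2 * s ^ 4) ^ 2 *
      (2 * a ^ 2 * t ^ 8 + 10 * a * s ^ 4 * t ^ 4 - s ^ 8) ^ 2 *
      (a ^ 2 * t ^ 8 + 14 * a * s ^ 4 * t ^ 4 - 5 * s ^ 8) /
      ((a * t ^ 4 + s ^ 4) *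
        (a ^ 3 * t ^ 12 + 3 * a ^ 2 * t ^ 8 * s ^ 4 + 111 * a * s ^ 8 * t ^ 4 + s ^ 12) * D))
    (hy : y = -(1 / 6) * (a * t ^ 4 + s ^ 4) ^ 2 *
      (a ^ 3 * t ^ 12 + 3 * a ^ 2 * t ^ 8 * s ^ 4 + 111 * a * s ^ 8 * t ^ 4 + s ^ 12) ^ 2 *
      (a ^ 2 * t ^ 8 + 14 * a * s ^ 4 * t ^ 4 - 5 * s ^ 8) /
      (s ^ 3 * t * (a * t ^ 4 - 2 * s ^ 4) *
        (2 * a ^ 2 * t ^ 8 + 10 * a * s ^ 4 * t ^ 4 - s ^ 8) * D))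
    (hz : z = 2 * s * D /
      (t * (a ^ 2 * t ^ 8 + 14 * a * s ^ 4 * t ^ 4 - 5 * s ^ 8) * (a * t ^ 4 + s ^ 4) *
        (a ^ 3 * t ^ 12 + 3 * a ^ 2 * t ^ 8 * s ^ 4 + 111 * a * s ^ 8 * t ^ 4 + s ^ 12))) :
    x * y * z * (x + y + z) = a := by
  rw [mul_mul_eq_of_factors hs ht h1 h2 h3 h4 h5 h6 hx hy hz,
    add_add_eq_of_factors hs ht h1 h2 h3 h4 h5 h6 rfl rfl rfl rfl rfl hD hx hy hz,
    div_mul_div_comm, div_eq_iff (mul_ne_zero h6 (by simp [hs, ht, h1, h2, h3]))]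
  ring
end

section
/- Let a, s, t be rational numbers with 4at⁴ + s⁴ ≠ 0 and 2a²t⁸ + 10as⁴t⁴ − s⁸ ≠ 0, and set U = (at⁴ − 2s⁴)/(4at⁴ + s⁴). Then there exists a rational number V such that V² = −16at⁴U⁴ + 4at⁴U³ − 4s⁴U + s⁴. -/
/-!
Since `s⁴ = (s²)²`, the point `(0, s²)` lies on the quartic. The parabola `V = s²(1 - 2U - 2U²)`
meets the quartic to third order there, so its fourth intersection with the quartic is again
rational; that intersection is `U = (at⁴ - 2s⁴)/(4at⁴ + s⁴)`.
-/

def eulerQuartic {R : Type*} [CommRing R] (c d U : R) : R :=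
  -16 * c * U ^ 4 + 4 * c * U ^ 3 - 4 * d * U + d

section

variable {R : Type*} [CommRing R] (c e U : R)

theorem eulerQuartic_eq_sq_add :
    eulerQuartic c (e ^ 2) U =
      (e * (1 - 2 * U - 2 * U ^ 2)) ^ 2 + 4 * U ^ 3 * (c - 2 * e ^ 2 - (4 * c + e ^ 2) * U) := by
  unfold eulerQuartic
  ring

theorem eulerQuartic_eq_sq_of_mul_eq {c e U : R} (hU : (4 * c + e ^ 2) * U = c - 2 * e ^ 2) :
    eulerQuartic c (e ^ 2) U = (e * (1 - 2 * U - 2 * U ^ 2)) ^ 2 := by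
  rw [eulerQuartic_eq_sq_add, hU, sub_self, mul_zero, add_zero]

end

theorem stmt_5_general (a s t : ℚ)
    (h2 : 4 * a * t ^ 4 + s ^ 4 ≠ 0)
    (U : ℚ) (hU : U = (a * t ^ 4 - 2 * s ^ 4) / (4 * a * t ^ 4 + s ^ 4)) :
    ∃ V : ℚ, V ^ 2 = -16 * a * t ^ 4 * U ^ 4 + 4 * a * t ^ 4 * U ^ 3 - 4 * s ^ 4 * U + s ^ 4 := by
  have hroot : (4 * a * t ^ 4 + s ^ 4) * U = a * t ^ 4 - 2 * s ^ 4 := by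
    rw [hU, mul_div_cancel₀ _ h2]
  have hsq := eulerQuartic_eq_sq_of_mul_eq (c := a * t ^ 4) (e := s ^ 2) (U := U)
    (by linear_combination hroot)
  refine ⟨s ^ 2 * (1 - 2 * U - 2 * U ^ 2), ?_⟩
  rw [← hsq, eulerQuartic]
  ring

theorem stmt_5 (a s t : ℚ)
    (h2 : 4 * a * t ^ 4 + s ^ 4 ≠ 0)
    (h3 : 2 * a ^ 2 * t ^ 8 + 10 * a * s ^ 4 * t ^ 4 - s ^ 8 ≠ 0)
    (U : ℚ) (hU : U = (a * t ^ 4 - 2 * s ^ 4) / (4 * a * t ^ 4 + s ^ 4)) :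
    ∃ V : ℚ, V ^ 2 = -16 * a * t ^ 4 * U ^ 4 + 4 * a * t ^ 4 * U ^ 3 - 4 * s ^ 4 * U + s ^ 4 :=
  stmt_5_general a s t h2 U hU
end

section
/- Let a, s be rational numbers with s ≠ 0, s⁴ − 4a ≠ 0, s⁴ + 12a ≠ 0, and 3s⁴ + 4a ≠ 0. Define x = (s⁴ − 4a)² / (2s³(s⁴ + 12a)), y = 2a(3s⁴ + 4a)² / (s³(s⁴ − 4a)(s⁴ + 12a)), and z = s(s⁴ + 12a) / (2(3s⁴ + 4a)). Then xyz(x + y + z) = a. -/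
/-!
With `w = 2 s⁵ (s⁴ + 12a) / ((s⁴ - 4a)(3s⁴ + 4a))` one has `x + y + z = w` and `x y z w = a`,
two identities of rational functions in `a` and `s`.
-/

namespace Elkies

variable {K : Type*} [Field K] {a s : K}

def x (a s : K) : K := (s ^ 4 - 4 * a) ^ 2 / (2 * s ^ 3 * (s ^ 4 + 12 * a))

def y (a s : K) : K :=
  2 * a * (3 * s ^ 4 + 4 * a) ^ 2 / (s ^ 3 * (s ^ 4 - 4 * a) * (s ^ 4 + 12 * a))

def z (a s : K) : K := s * (s ^ 4 + 12 * a) / (2 * (3 * s ^ 4 + 4 * a))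

def w (a s : K) : K := 2 * s ^ 5 * (s ^ 4 + 12 * a) / ((s ^ 4 - 4 * a) * (3 * s ^ 4 + 4 * a))

theorem x_add_y_add_z [NeZero (2 : K)] (hs : s ≠ 0)
    (h1 : s ^ 4 - 4 * a ≠ 0) (h2 : s ^ 4 + 12 * a ≠ 0) (h3 : 3 * s ^ 4 + 4 * a ≠ 0) :
    x a s + y a s + z a s = w a s := by
  have h0 : (2 : K) ≠ 0 := two_ne_zero
  unfold x y z w
  rw [div_add_div _ _ (by simp [*]) (by simp [*]), div_add_div _ _ (by simp [*]) (by simp [*]),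
    div_eq_div_iff (by simp [*]) (by simp [*])]
  ring

theorem x_mul_y_mul_z_mul_w [NeZero (2 : K)] (hs : s ≠ 0)
    (h1 : s ^ 4 - 4 * a ≠ 0) (h2 : s ^ 4 + 12 * a ≠ 0) (h3 : 3 * s ^ 4 + 4 * a ≠ 0) :
    x a s * y a s * z a s * w a s = a := by
  have h0 : (2 : K) ≠ 0 := two_ne_zero
  unfold x y z w
  simp only [div_mul_div_comm]
  rw [div_eq_iff (by simp [*])]
  ring

theorem mul_mul_mul_add_add [NeZero (2 : K)] (hs : s ≠ 0)
    (h1 : s ^ 4 - 4 * a ≠ 0) (h2 : s ^ 4 + 12 * a ≠ 0) (h3 : 3 * s ^ 4 + 4 * a ≠ 0) :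
    x a s * y a s * z a s * (x a s + y a s + z a s) = a := by
  rw [x_add_y_add_z hs h1 h2 h3]
  exact x_mul_y_mul_z_mul_w hs h1 h2 h3

end Elkies

theorem stmt_6 (a s : ℚ) (hs : s ≠ 0)
    (h1 : s ^ 4 - 4 * a ≠ 0) (h2 : s ^ 4 + 12 * a ≠ 0) (h3 : 3 * s ^ 4 + 4 * a ≠ 0)
    (x y z : ℚ)
    (hx : x = (s ^ 4 - 4 * a) ^ 2 / (2 * s ^ 3 * (s ^ 4 + 12 * a)))
    (hy : y = 2 * a * (3 * s ^ 4 + 4 * a) ^ 2 / (s ^ 3 * (s ^ 4 - 4 * a) * (s ^ 4 + 12 * a)))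
    (hz : z = s * (s ^ 4 + 12 * a) / (2 * (3 * s ^ 4 + 4 * a))) :
    x * y * z * (x + y + z) = a := by
  subst hx hy hz
  exact Elkies.mul_mul_mul_add_add hs h1 h2 h3
end

section
/- Let a, s be rational numbers with s ≠ 0 and s⁴ + 12a ≠ 0, and set X₂ = (1/4)·(s¹⁶ − 464s¹²a + 1632s⁸a² + 768a³s⁴ + 256a⁴) / (s⁴(s⁴ + 12a)²). Then there exists a rational number V such that V² = X₂³ + 4aX₂² − 32s⁴aX₂ + 64as⁸. -/
/-!
The point `P = (s⁴ - 4a, s⁶ + 12as²)` lies on the Weierstrass curve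
`E : y² = x³ + 4ax² - 32s⁴ax + 64as⁸`, and `X₂` is the `x`-coordinate of `2P`: the tangent at `P`
has slope `(3x² + 8ax - 32s⁴a) / (2y)` with `2y = 2s²(s⁴ + 12a) ≠ 0`, so the doubling formula of the group law
applies and produces a point of `E` over `ℚ` whose `y`-coordinate is the required `V`.
-/

open WeierstrassCurve Affine

section

variable {F : Type*} [Field F]

def elkiesCurve (a s : F) : Affine F := ⟨0, 4 * a, 0, -32 * s ^ 4 * a, 64 * a * s ^ 8⟩

lemma elkiesCurve_equation_iff (a s x y : F) :
    (elkiesCurve a s).Equation x y ↔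
      y ^ 2 = x ^ 3 + 4 * a * x ^ 2 - 32 * s ^ 4 * a * x + 64 * a * s ^ 8 := by
  rw [equation_iff]
  simp only [elkiesCurve]
  constructor <;> intro h <;> linear_combination h

lemma elkiesCurve_equation_basePoint (a s : F) :
    (elkiesCurve a s).Equation (s ^ 4 - 4 * a) (s ^ 6 + 12 * a * s ^ 2) := by
  rw [elkiesCurve_equation_iff]
  ring

variable {a s : F}

lemma elkiesCurve_basePoint_sub_negY :
    (s ^ 6 + 12 * a * s ^ 2) - (elkiesCurve a s).negY (s ^ 4 - 4 * a) (s ^ 6 + 12 * a * s ^ 2) =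
      2 * s ^ 2 * (s ^ 4 + 12 * a) := by
  simp only [negY, elkiesCurve]
  ring

variable [NeZero (2 : F)]

lemma elkiesCurve_basePoint_Y_ne (hs : s ≠ 0) (h : s ^ 4 + 12 * a ≠ 0) :
    s ^ 6 + 12 * a * s ^ 2 ≠ (elkiesCurve a s).negY (s ^ 4 - 4 * a) (s ^ 6 + 12 * a * s ^ 2) := by
  rw [← sub_ne_zero, elkiesCurve_basePoint_sub_negY]
  exact mul_ne_zero (mul_ne_zero two_ne_zero (pow_ne_zero 2 hs)) h

lemma elkiesCurve_addX_double_basePoint [DecidableEq F] (hs : s ≠ 0) (h : s ^ 4 + 12 * a ≠ 0) :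
    (elkiesCurve a s).addX (s ^ 4 - 4 * a) (s ^ 4 - 4 * a)
        ((elkiesCurve a s).slope (s ^ 4 - 4 * a) (s ^ 4 - 4 * a)
          (s ^ 6 + 12 * a * s ^ 2) (s ^ 6 + 12 * a * s ^ 2)) =
      1 / 4 * (s ^ 16 - 464 * s ^ 12 * a + 1632 * s ^ 8 * a ^ 2 + 768 * a ^ 3 * s ^ 4 +
        256 * a ^ 4) / (s ^ 4 * (s ^ 4 + 12 * a) ^ 2) := by
  have h4 : (4 : F) ≠ 0 := by
    rw [show (4 : F) = 2 * 2 by norm_num]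
    exact mul_ne_zero two_ne_zero two_ne_zero
  rw [slope_of_Y_ne rfl (elkiesCurve_basePoint_Y_ne hs h), elkiesCurve_basePoint_sub_negY]
  simp only [addX, elkiesCurve]
  -- `field_simp` looks for the denominator in its own normal form `s ^ 4 + a * 12`
  have h' : s ^ 4 + a * 12 ≠ 0 := by rwa [mul_comm a]
  field_simp
  ring

end

theorem stmt_10 (a s : ℚ) (hs : s ≠ 0) (h : s ^ 4 + 12 * a ≠ 0)
    (X₂ : ℚ)
    (hX : X₂ = 1 / 4 * (s ^ 16 - 464 * s ^ 12 * a + 1632 * s ^ 8 * a ^ 2 + 768 * a ^ 3 * s ^ 4 +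
      256 * a ^ 4) / (s ^ 4 * (s ^ 4 + 12 * a) ^ 2)) :
    ∃ V : ℚ, V ^ 2 = X₂ ^ 3 + 4 * a * X₂ ^ 2 - 32 * s ^ 4 * a * X₂ + 64 * a * s ^ 8 := by
  have hP := elkiesCurve_equation_basePoint a s
  have h2P := equation_add hP hP fun hxy => elkiesCurve_basePoint_Y_ne hs h hxy.2
  rw [elkiesCurve_addX_double_basePoint hs h, ← hX, elkiesCurve_equation_iff] at h2P
  exact ⟨_, h2P⟩
end

section
/- Let a, s be rational numbers with s ≠ 0 and with each of the following nonzero: s⁴ − 4a, s⁴ + 12a, 5s⁴ − 4a, 3s⁴ + 4a, s⁸ + 56s⁴a + 16a², s⁸ − 32s⁴a − 16a², s¹² − 460s⁸a − 208a²s⁴ − 64a³, and D := s¹⁶ + 1136s¹²a − 928s⁸a² + 1792a³s⁴ + 256a⁴. Define x = −(1/4)·(s⁴ − 4a)²(s¹² − 460s⁸a − 208a²s⁴ − 64a³)² / (s³(s⁴ + 12a)(s⁸ − 32s⁴a − 16a²)·D), y = −4a·s(s⁴ + 12a)(5s⁴ − 4a)²(3s⁴ + 4a)²(s⁸ + 56s⁴a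 + 16a²)² / (D·(s⁸ − 32s⁴a − 16a²)(s⁴ − 4a)(s¹² − 460s⁸a − 208a²s⁴ − 64a³)), and z = −(1/4)·(s⁸ − 32s⁴a − 16a²)·D / (s³(5s⁴ − 4a)(3s⁴ + 4a)(s⁸ + 56s⁴a + 16a²)(s⁴ + 12a)). Then xyz(x + y + z) = a. -/
/-!
Write A = s⁴ − 4a, B = s⁴ + 12a, C = 5s⁴ − 4a, E = 3s⁴ + 4a, F = s⁸ + 56s⁴a + 16a²,
G = s⁸ − 32s⁴a − 16a², H = s¹² − 460s⁸a − 208a²s⁴ − 64a³. The factors of x, y, z are arranged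
so that the product cancels down to xyz = −a·ACEFH / (4s⁵BGD). What the point 2P contributes is
the single polynomial identity x + y + z = −4s⁵BGD / (ACEFH), the negated reciprocal of xyz / a;
multiplying the two gives a.
-/

variable {K : Type*} [Field K]

def elkiesD (a s : K) : K :=
  s ^ 16 + 1136 * s ^ 12 * a - 928 * s ^ 8 * a ^ 2 + 1792 * a ^ 3 * s ^ 4 + 256 * a ^ 4

def elkiesX (a s : K) : K :=
  -(1 / 4) * (s ^ 4 - 4 * a) ^ 2 *
    (s ^ 12 - 460 * s ^ 8 * a - 208 * a ^ 2 * s ^ 4 - 64 * a ^ 3) ^ 2 /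
    (s ^ 3 * (s ^ 4 + 12 * a) * (s ^ 8 - 32 * s ^ 4 * a - 16 * a ^ 2) * elkiesD a s)

def elkiesY (a s : K) : K :=
  -4 * a * s * (s ^ 4 + 12 * a) * (5 * s ^ 4 - 4 * a) ^ 2 * (3 * s ^ 4 + 4 * a) ^ 2 *
    (s ^ 8 + 56 * s ^ 4 * a + 16 * a ^ 2) ^ 2 /
    (elkiesD a s * (s ^ 8 - 32 * s ^ 4 * a - 16 * a ^ 2) * (s ^ 4 - 4 * a) *
      (s ^ 12 - 460 * s ^ 8 * a - 208 * a ^ 2 * s ^ 4 - 64 * a ^ 3))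

def elkiesZ (a s : K) : K :=
  -(1 / 4) * (s ^ 8 - 32 * s ^ 4 * a - 16 * a ^ 2) * elkiesD a s /
    (s ^ 3 * (5 * s ^ 4 - 4 * a) * (3 * s ^ 4 + 4 * a) *
      (s ^ 8 + 56 * s ^ 4 * a + 16 * a ^ 2) * (s ^ 4 + 12 * a))

theorem elkiesX_mul_elkiesY_mul_elkiesZ {a s : K} (hs : s ≠ 0) (h1 : s ^ 4 - 4 * a ≠ 0)
    (h8 : elkiesD a s ≠ 0) :
    elkiesX a s * elkiesY a s * elkiesZ a s =
      -a * ((s ^ 4 - 4 * a) * (5 * s ^ 4 - 4 * a) * (3 * s ^ 4 + 4 * a) *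
        (s ^ 8 + 56 * s ^ 4 * a + 16 * a ^ 2) *
        (s ^ 12 - 460 * s ^ 8 * a - 208 * a ^ 2 * s ^ 4 - 64 * a ^ 3)) /
      (4 * (s ^ 5 * (s ^ 4 + 12 * a) * (s ^ 8 - 32 * s ^ 4 * a - 16 * a ^ 2) * elkiesD a s)) := by
  unfold elkiesX elkiesY elkiesZ
  field_simp

theorem elkiesX_add_elkiesY_add_elkiesZ [CharZero K] {a s : K} (hs : s ≠ 0)
    (h1 : s ^ 4 - 4 * a ≠ 0) (h2 : s ^ 4 + 12 * a ≠ 0) (h3 : 5 * s ^ 4 - 4 * a ≠ 0)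
    (h4 : 3 * s ^ 4 + 4 * a ≠ 0) (h5 : s ^ 8 + 56 * s ^ 4 * a + 16 * a ^ 2 ≠ 0)
    (h6 : s ^ 8 - 32 * s ^ 4 * a - 16 * a ^ 2 ≠ 0)
    (h7 : s ^ 12 - 460 * s ^ 8 * a - 208 * a ^ 2 * s ^ 4 - 64 * a ^ 3 ≠ 0)
    (h8 : elkiesD a s ≠ 0) :
    elkiesX a s + elkiesY a s + elkiesZ a s =
      -4 * (s ^ 5 * (s ^ 4 + 12 * a) * (s ^ 8 - 32 * s ^ 4 * a - 16 * a ^ 2) * elkiesD a s) /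
      ((s ^ 4 - 4 * a) * (5 * s ^ 4 - 4 * a) * (3 * s ^ 4 + 4 * a) *
        (s ^ 8 + 56 * s ^ 4 * a + 16 * a ^ 2) *
        (s ^ 12 - 460 * s ^ 8 * a - 208 * a ^ 2 * s ^ 4 - 64 * a ^ 3)) := by
  unfold elkiesX elkiesY elkiesZ
  rw [div_add_div _ _ ?_ ?_, div_add_div _ _ ?_ ?_, div_eq_div_iff ?_ ?_]
  · unfold elkiesD
    ring
  all_goals apply_rules [mul_ne_zero, pow_ne_zero]

theorem stmt_11 (a s : ℚ) (hs : s ≠ 0)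
    (h1 : s ^ 4 - 4 * a ≠ 0) (h2 : s ^ 4 + 12 * a ≠ 0) (h3 : 5 * s ^ 4 - 4 * a ≠ 0)
    (h4 : 3 * s ^ 4 + 4 * a ≠ 0) (h5 : s ^ 8 + 56 * s ^ 4 * a + 16 * a ^ 2 ≠ 0)
    (h6 : s ^ 8 - 32 * s ^ 4 * a - 16 * a ^ 2 ≠ 0)
    (h7 : s ^ 12 - 460 * s ^ 8 * a - 208 * a ^ 2 * s ^ 4 - 64 * a ^ 3 ≠ 0)
    (D : ℚ)
    (hD : D = s ^ 16 + 1136 * s ^ 12 * a - 928 * s ^ 8 * a ^ 2 + 1792 * a ^ 3 * s ^ 4 +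
      256 * a ^ 4)
    (h8 : D ≠ 0)
    (x y z : ℚ)
    (hx : x = -(1 / 4) * (s ^ 4 - 4 * a) ^ 2 *
      (s ^ 12 - 460 * s ^ 8 * a - 208 * a ^ 2 * s ^ 4 - 64 * a ^ 3) ^ 2 /
      (s ^ 3 * (s ^ 4 + 12 * a) * (s ^ 8 - 32 * s ^ 4 * a - 16 * a ^ 2) * D))
    (hy : y = -4 * a * s * (s ^ 4 + 12 * a) * (5 * s ^ 4 - 4 * a) ^ 2 * (3 * s ^ 4 + 4 * a) ^ 2 *
      (s ^ 8 + 56 * s ^ 4 * a + 16 * a ^ 2) ^ 2 /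
      (D * (s ^ 8 - 32 * s ^ 4 * a - 16 * a ^ 2) * (s ^ 4 - 4 * a) *
        (s ^ 12 - 460 * s ^ 8 * a - 208 * a ^ 2 * s ^ 4 - 64 * a ^ 3)))
    (hz : z = -(1 / 4) * (s ^ 8 - 32 * s ^ 4 * a - 16 * a ^ 2) * D /
      (s ^ 3 * (5 * s ^ 4 - 4 * a) * (3 * s ^ 4 + 4 * a) *
        (s ^ 8 + 56 * s ^ 4 * a + 16 * a ^ 2) * (s ^ 4 + 12 * a))) :
    x * y * z * (x + y + z) = a := by
  subst hx hy hz hD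
  replace h8 : elkiesD a s ≠ 0 := h8
  change elkiesX a s * elkiesY a s * elkiesZ a s * (elkiesX a s + elkiesY a s + elkiesZ a s) = a
  rw [elkiesX_mul_elkiesY_mul_elkiesZ hs h1 h8,
    elkiesX_add_elkiesY_add_elkiesZ hs h1 h2 h3 h4 h5 h6 h7 h8, div_mul_div_comm,
    div_eq_iff (by apply_rules [mul_ne_zero, pow_ne_zero, four_ne_zero])]
  ring
end

section
/- For every positive rational number a, the set of triples (x, y, z) of positive rational numbers satisfying xyz(x + y + z) = a is infinite. -/
private lemma pow4_inj (s t : ℚ) (hs : 0 < s) (ht : 0 < t) (h : s^4 = t^4) : s = t := by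
  rcases lt_trichotomy s t with h' | h' | h'
  · exact absurd (pow_lt_pow_left₀ h' hs.le (Nat.succ_ne_zero 3)) (by rw [h]; exact lt_irrefl _)
  · exact h'
  · exact absurd (pow_lt_pow_left₀ h' ht.le (Nat.succ_ne_zero 3)) (by rw [h]; exact lt_irrefl _)


theorem stmt_13 (a : ℚ) (ha : 0 < a) :
    {p : ℚ × ℚ × ℚ | 0 < p.1 ∧ 0 < p.2.1 ∧ 0 < p.2.2 ∧
      p.1 * p.2.1 * p.2.2 * (p.1 + p.2.1 + p.2.2) = a}.Infinite := by
  -- Elkies's parametrization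
  set X : ℚ → ℚ := fun s => (s^4 - 4*a)^2 / (2*s^3*(s^4 + 12*a)) with hX
  set Y : ℚ → ℚ := fun s => 2*a*(3*s^4 + 4*a)^2 / (s^3*(s^4 - 4*a)*(s^4 + 12*a)) with hY
  set Z : ℚ → ℚ := fun s => s*(s^4 + 12*a)/(2*(3*s^4 + 4*a)) with hZ
  -- basic positivity facts for s with s > 0 and s^4 > 4a
  have key : ∀ s : ℚ, 0 < s → 4*a < s^4 →
      0 < X s ∧ 0 < Y s ∧ 0 < Z s ∧
      X s * Y s * Z s * (X s + Y s + Z s) = a ∧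
      (X s + Y s + Z s) * (s^4 - 4*a) = Z s * (4*s^4) := by
    intro s hs hs4
    have h1 : (0:ℚ) < s^4 - 4*a := by linarith
    have h2 : (0:ℚ) < s^4 + 12*a := by nlinarith [pow_pos hs 4]
    have h3 : (0:ℚ) < 3*s^4 + 4*a := by nlinarith [pow_pos hs 4]
    have h4 : (0:ℚ) < s^3 := pow_pos hs 3
    have h1' : s^4 - 4*a ≠ 0 := ne_of_gt h1
    have h2' : s^4 + 12*a ≠ 0 := ne_of_gt h2
    have h3' : 3*s^4 + 4*a ≠ 0 := ne_of_gt h3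
    have h4' : s^3 ≠ 0 := ne_of_gt h4
    refine ⟨?_, ?_, ?_, ?_, ?_⟩
    · exact div_pos (by positivity) (by positivity)
    · exact div_pos (by positivity) (by positivity)
    · exact div_pos (by positivity) (by positivity)
    · simp only [hX, hY, hZ]
      field_simp
      ring
    · simp only [hX, hY, hZ]
      field_simp
      ring
  -- the parametrizing family
  set f : ℕ → ℚ × ℚ × ℚ := fun n => (X ((n:ℚ) + a + 1), Y ((n:ℚ) + a + 1), Z ((n:ℚ) + a + 1))
    with hf
  have hsprop : ∀ n : ℕ, 0 < ((n:ℚ) + a + 1) ∧ 4*a < ((n:ℚ) + a + 1)^4 := by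
    intro n
    have hn : (0:ℚ) ≤ (n:ℚ) := Nat.cast_nonneg n
    constructor
    · linarith
    · nlinarith [sq_nonneg ((n:ℚ) + a), sq_nonneg ((n:ℚ) + a - 1), sq_nonneg ((n:ℚ) + a + 1)]
  apply Set.infinite_of_injective_forall_mem (f := f)
  · -- injectivity
    intro m n hmn
    set s : ℚ := (m:ℚ) + a + 1 with hsdef
    set t : ℚ := (n:ℚ) + a + 1 with htdef
    obtain ⟨hs0, hs4⟩ := hsprop m
    obtain ⟨ht0, ht4⟩ := hsprop n
    obtain ⟨hxs, hys, hzs, hes, hqs⟩ := key s hs0 hs4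
    obtain ⟨hxt, hyt, hzt, het, hqt⟩ := key t ht0 ht4
    simp only [hf, Prod.mk.injEq] at hmn
    obtain ⟨e1, e2, e3⟩ := hmn
    -- sums are equal
    have hsum : X s + Y s + Z s = X t + Y t + Z t := by rw [e1, e2, e3]
    -- derive s^4 = t^4
    have h44 : s^4 = t^4 := by
      have hq : (X t + Y t + Z t) * (s^4 - 4*a) = Z t * (4*s^4) := by
        rw [← hsum, ← e3]; exact hqs
      have hSt : 0 < X t + Y t + Z t := by linarith
      have k1 : s^4 * ((X t + Y t + Z t) - 4 * Z t) = 4*a*(X t + Y t + Z t) := by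
        linear_combination hq
      have k2 : t^4 * ((X t + Y t + Z t) - 4 * Z t) = 4*a*(X t + Y t + Z t) := by
        linear_combination hqt
      have hne : (X t + Y t + Z t) - 4 * Z t ≠ 0 := by
        intro h0
        rw [h0, mul_zero] at k1
        nlinarith
      exact mul_right_cancel₀ hne (k1.trans k2.symm)
    have hst : s = t := pow4_inj s t hs0 ht0 h44
    have : (m:ℚ) = n := by
      have := hst
      simp only [hsdef, htdef] at this
      linarith
    exact_mod_cast this
  · intro n
    obtain ⟨hs0, hs4⟩ := hsprop n
    obtain ⟨hx, hy, hz, he, _⟩ := key _ hs0 hs4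
    exact ⟨hx, hy, hz, he⟩
end

section
/- Let a, t be rational numbers with t ≠ 0 and with each of the following nonzero: 2t⁵a³ + t⁵ − 2a², t¹⁰a⁴ − 2t⁵a³ − t⁵ + a², t¹⁰ + a − 2t⁵a² + t¹⁰a³, t⁵a + 1, and t⁵a − 1. Define w = −a(t¹⁰a⁴ − 2t⁵a³ − t⁵ + a²)(t⁵a + 1)(t⁵a − 1) / (t⁴(2t⁵a³ + t⁵ − 2a²)(t¹⁰ + a − 2t⁵a² + t¹⁰a³)), x = −(t¹⁰a⁴ − 2t⁵a³ − t⁵ + a²) / (t⁴(2t⁵a³ + t⁵ − 2a²)), y = −t⁶(2t⁵a³ + t⁵ − 2a²)(t⁵a + 1)(t⁵a − 1) / ((t¹⁰a⁴ − 2t⁵a³ − t⁵ + a²)(t¹⁰ + a − 2t⁵a² + t¹⁰a³)), and z = t(t¹⁰ + a − 2t⁵a² + t¹⁰a³) / ((t⁵a + 1)(t⁵a − 1)). Then wxyz(w + x + y + z) = a. -/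
/-!
Write `p, q, r` for the three long polynomials in `a, t` and `u v = (t⁵a + 1)(t⁵a - 1)`, so that
`w = -a q u v / (t⁴ p r)`, `x = -q / (t⁴ p)`, `y = -t⁶ p u v / (q r)` and `z = t r / (u v)`.
Most factors cancel in the product: `w x y z = -a q u v / (t p r)`. Hence the claim reduces to
`w + x + y + z = -t p r / (q u v)`, which after clearing denominators is a single polynomial
identity in `a, t`.
-/

namespace ParamSolution

section

variable {K : Type*} [Field K] {a t p q r u v : K}

theorem prod_eq (ht : t ≠ 0) (hp : p ≠ 0) (hq : q ≠ 0) (hr : r ≠ 0) (hu : u ≠ 0) (hv : v ≠ 0) :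
    (-a * q * u * v / (t ^ 4 * p * r)) * (-q / (t ^ 4 * p)) * (-t ^ 6 * p * u * v / (q * r)) *
      (t * r / (u * v)) = -a * q * u * v / (t * p * r) := by
  field_simp

theorem sum_eq (ht : t ≠ 0) (hp : p ≠ 0) (hq : q ≠ 0) (hr : r ≠ 0) (hu : u ≠ 0) (hv : v ≠ 0)
    (hkey : a * q ^ 2 * (u * v) ^ 2 + q ^ 2 * r * (u * v) + t ^ 10 * p ^ 2 * (u * v) ^ 2 =
      t ^ 5 * p * r ^ 2 * (p + q)) :
    -a * q * u * v / (t ^ 4 * p * r) + -q / (t ^ 4 * p) + -t ^ 6 * p * u * v / (q * r) +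
      t * r / (u * v) = -t * p * r / (q * u * v) := by
  have hdiff : -a * q * u * v / (t ^ 4 * p * r) + -q / (t ^ 4 * p) +
      -t ^ 6 * p * u * v / (q * r) + t * r / (u * v) - -t * p * r / (q * u * v) =
      (t ^ 5 * p * r ^ 2 * (p + q) - (a * q ^ 2 * (u * v) ^ 2 + q ^ 2 * r * (u * v) +
        t ^ 10 * p ^ 2 * (u * v) ^ 2)) / (t ^ 4 * p * q * r * (u * v)) := by
    field_simp
    ring
  rw [← sub_eq_zero, hdiff, hkey, sub_self, zero_div]

theorem prod_mul_sum_eq (ht : t ≠ 0) (hp : p ≠ 0) (hq : q ≠ 0) (hr : r ≠ 0) (hu : u ≠ 0)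
    (hv : v ≠ 0)
    (hkey : a * q ^ 2 * (u * v) ^ 2 + q ^ 2 * r * (u * v) + t ^ 10 * p ^ 2 * (u * v) ^ 2 =
      t ^ 5 * p * r ^ 2 * (p + q)) :
    let w := -a * q * u * v / (t ^ 4 * p * r)
    let x := -q / (t ^ 4 * p)
    let y := -t ^ 6 * p * u * v / (q * r)
    let z := t * r / (u * v)
    w * x * y * z * (w + x + y + z) = a := by
  intro w x y z
  rw [prod_eq ht hp hq hr hu hv, sum_eq ht hp hq hr hu hv hkey]
  field_simp

end

theorem key_identity {R : Type*} [CommRing R] (a t : R) :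
    a * (t ^ 10 * a ^ 4 - 2 * t ^ 5 * a ^ 3 - t ^ 5 + a ^ 2) ^ 2 *
        ((t ^ 5 * a + 1) * (t ^ 5 * a - 1)) ^ 2 +
      (t ^ 10 * a ^ 4 - 2 * t ^ 5 * a ^ 3 - t ^ 5 + a ^ 2) ^ 2 *
        (t ^ 10 + a - 2 * t ^ 5 * a ^ 2 + t ^ 10 * a ^ 3) * ((t ^ 5 * a + 1) * (t ^ 5 * a - 1)) +
      t ^ 10 * (2 * t ^ 5 * a ^ 3 + t ^ 5 - 2 * a ^ 2) ^ 2 *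
        ((t ^ 5 * a + 1) * (t ^ 5 * a - 1)) ^ 2 =
    t ^ 5 * (2 * t ^ 5 * a ^ 3 + t ^ 5 - 2 * a ^ 2) *
        (t ^ 10 + a - 2 * t ^ 5 * a ^ 2 + t ^ 10 * a ^ 3) ^ 2 *
      ((2 * t ^ 5 * a ^ 3 + t ^ 5 - 2 * a ^ 2) +
        (t ^ 10 * a ^ 4 - 2 * t ^ 5 * a ^ 3 - t ^ 5 + a ^ 2)) := by
  ring

end ParamSolution

theorem stmt_14 (a t : ℚ) (ht : t ≠ 0)
    (h1 : 2 * t ^ 5 * a ^ 3 + t ^ 5 - 2 * a ^ 2 ≠ 0)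
    (h2 : t ^ 10 * a ^ 4 - 2 * t ^ 5 * a ^ 3 - t ^ 5 + a ^ 2 ≠ 0)
    (h3 : t ^ 10 + a - 2 * t ^ 5 * a ^ 2 + t ^ 10 * a ^ 3 ≠ 0)
    (h4 : t ^ 5 * a + 1 ≠ 0) (h5 : t ^ 5 * a - 1 ≠ 0)
    (w x y z : ℚ)
    (hw : w = -a * (t ^ 10 * a ^ 4 - 2 * t ^ 5 * a ^ 3 - t ^ 5 + a ^ 2) * (t ^ 5 * a + 1) *
      (t ^ 5 * a - 1) /
      (t ^ 4 * (2 * t ^ 5 * a ^ 3 + t ^ 5 - 2 * a ^ 2) *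
        (t ^ 10 + a - 2 * t ^ 5 * a ^ 2 + t ^ 10 * a ^ 3)))
    (hx : x = -(t ^ 10 * a ^ 4 - 2 * t ^ 5 * a ^ 3 - t ^ 5 + a ^ 2) /
      (t ^ 4 * (2 * t ^ 5 * a ^ 3 + t ^ 5 - 2 * a ^ 2)))
    (hy : y = -t ^ 6 * (2 * t ^ 5 * a ^ 3 + t ^ 5 - 2 * a ^ 2) * (t ^ 5 * a + 1) *
      (t ^ 5 * a - 1) /
      ((t ^ 10 * a ^ 4 - 2 * t ^ 5 * a ^ 3 - t ^ 5 + a ^ 2) *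
        (t ^ 10 + a - 2 * t ^ 5 * a ^ 2 + t ^ 10 * a ^ 3)))
    (hz : z = t * (t ^ 10 + a - 2 * t ^ 5 * a ^ 2 + t ^ 10 * a ^ 3) /
      ((t ^ 5 * a + 1) * (t ^ 5 * a - 1))) :
    w * x * y * z * (w + x + y + z) = a := by
  subst hw hx hy hz
  exact ParamSolution.prod_mul_sum_eq ht h1 h2 h3 h4 h5 (ParamSolution.key_identity a t)
end

section
/- Let a, t be rational numbers with t ≠ 0 and t¹⁰a⁴ − 2t⁵a³ − t⁵ + a² ≠ 0, and set A₂ = −t⁵(2t⁵a³ + t⁵ − 2a²) / (t¹⁰a⁴ − 2t⁵a³ − t⁵ + a²). Then there exists a rational number v such that v² = 4t⁵A₂⁴ − 4t¹⁰A₂³ + 4t⁵aA₂² − 4t¹⁰aA₂ + t¹⁰. -/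
/-!
The quartic has the rational point `(0, t⁵)`. The parabola `v = t⁵ - 2t⁵aA + (2a - 2t⁵a²)A²`
meets it at `A = 0` with multiplicity three, so the fourth intersection has a rational
`A`-coordinate, namely `A₂`, and the parabola gives its `v`-coordinate.
-/

theorem mul_mul_add_eq_zero_of_eq_neg_div {K : Type*} [Field K] {α β x : K} (hx : x = -β / α) :
    x * (α * x + β) = 0 := by
  rcases eq_or_ne α 0 with rfl | hα
  · simp [hx]
  · rw [hx, mul_div_cancel₀ _ hα, neg_add_cancel, mul_zero]

theorem quartic_eq_parabola_sq_sub {R : Type*} [CommRing R] (a t A : R) :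
    4 * t ^ 5 * A ^ 4 - 4 * t ^ 10 * A ^ 3 + 4 * t ^ 5 * a * A ^ 2 - 4 * t ^ 10 * a * A + t ^ 10 =
      (t ^ 5 - 2 * t ^ 5 * a * A + (2 * a - 2 * t ^ 5 * a ^ 2) * A ^ 2) ^ 2 -
        4 * A ^ 2 * (A * ((t ^ 10 * a ^ 4 - 2 * t ^ 5 * a ^ 3 - t ^ 5 + a ^ 2) * A +
          t ^ 5 * (2 * t ^ 5 * a ^ 3 + t ^ 5 - 2 * a ^ 2))) := by
  ring

theorem stmt_16_general (a t : ℚ)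
    (A₂ : ℚ)
    (hA : A₂ = -t ^ 5 * (2 * t ^ 5 * a ^ 3 + t ^ 5 - 2 * a ^ 2) /
      (t ^ 10 * a ^ 4 - 2 * t ^ 5 * a ^ 3 - t ^ 5 + a ^ 2)) :
    ∃ v : ℚ, v ^ 2 = 4 * t ^ 5 * A₂ ^ 4 - 4 * t ^ 10 * A₂ ^ 3 + 4 * t ^ 5 * a * A₂ ^ 2 -
      4 * t ^ 10 * a * A₂ + t ^ 10 := by
  rw [neg_mul] at hA
  use t ^ 5 - 2 * t ^ 5 * a * A₂ + (2 * a - 2 * t ^ 5 * a ^ 2) * A₂ ^ 2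
  rw [quartic_eq_parabola_sq_sub, mul_mul_add_eq_zero_of_eq_neg_div hA, mul_zero, sub_zero]

theorem stmt_16 (a t : ℚ) (ht : t ≠ 0)
    (h : t ^ 10 * a ^ 4 - 2 * t ^ 5 * a ^ 3 - t ^ 5 + a ^ 2 ≠ 0)
    (A₂ : ℚ)
    (hA : A₂ = -t ^ 5 * (2 * t ^ 5 * a ^ 3 + t ^ 5 - 2 * a ^ 2) /
      (t ^ 10 * a ^ 4 - 2 * t ^ 5 * a ^ 3 - t ^ 5 + a ^ 2)) :
    ∃ v : ℚ, v ^ 2 = 4 * t ^ 5 * A₂ ^ 4 - 4 * t ^ 10 * A₂ ^ 3 + 4 * t ^ 5 * a * A₂ ^ 2 -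
      4 * t ^ 10 * a * A₂ + t ^ 10 :=
  stmt_16_general a t A₂ hA
end

section
/- For every rational number a, the set of quadruples (w, x, y, z) of rational numbers satisfying wxyz(w + x + y + z) = a is infinite. -/
theorem stmt_17 (a : ℚ) :
    {p : ℚ × ℚ × ℚ × ℚ |
      p.1 * p.2.1 * p.2.2.1 * p.2.2.2 * (p.1 + p.2.1 + p.2.2.1 + p.2.2.2) = a}.Infinite := by
  set m : ℕ → ℚ := fun n => (n : ℚ) + |a| + 1 with hm
  have hm1 : ∀ n : ℕ, (1 : ℚ) ≤ m n := by
    intro n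
    have : (0:ℚ) ≤ (n:ℚ) := Nat.cast_nonneg n
    have := abs_nonneg a
    simp only [hm]; linarith
  have hm0 : ∀ n : ℕ, m n ≠ 0 := fun n => by
    have := hm1 n; intro h; rw [h] at this; linarith
  have hm2 : ∀ n : ℕ, |a| + 1 ≤ m n := by
    intro n
    have : (0:ℚ) ≤ (n:ℚ) := Nat.cast_nonneg n
    simp only [hm]; linarith
  have hma : ∀ n : ℕ, m n ^ 2 - a ≠ 0 := by
    intro n
    have h1 := hm2 n
    have h2 : |a| < m n ^ 2 := by nlinarith [abs_nonneg a]
    have h3 : a ≤ |a| := le_abs_self a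
    intro h; nlinarith
  set f : ℕ → ℚ × ℚ × ℚ × ℚ := fun n =>
    (m n - a / m n, -(m n - a / m n), 1 + a / (m n ^ 2 - a), -(a / (m n ^ 2 - a))) with hf
  apply Set.infinite_of_injective_forall_mem (f := f)
  case hi =>
    intro i j hij
    have h1 : (f i).1 = (f j).1 := by rw [hij]
    simp only [hf] at h1
    have hi0 := hm0 i
    have hj0 := hm0 j
    have h2 : (m i - m j) * (m i * m j + a) = 0 := by
      field_simp at h1
      nlinarith [h1]
    have h3 : m i * m j + a > 0 := by
      have := hm2 i; have := hm2 j
      have h3 : a ≤ |a| := le_abs_self a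
      have h4 : -|a| ≤ a := neg_abs_le a
      have := abs_nonneg a
      nlinarith
    have h4 : m i = m j := by
      rcases mul_eq_zero.mp h2 with h | h
      · linarith
      · linarith
    have : (i : ℚ) = (j : ℚ) := by simp only [hm] at h4; linarith
    exact_mod_cast this
  case hf =>
    intro n
    simp only [Set.mem_setOf_eq, hf]
    have h0 := hm0 n
    have h1 := hma n
    field_simp
    ring
end
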